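/- arXiv:1605.02168 — 2 statements merged into one kernel-verified Lean document; each statement's English description precedes it below -/
import Mathlib

section
/- Let e = {u,v} be an edge of G such that ω_E(e) ≥ 0, ω_E(e) + ω_V(u) ≥ 0, and ω_E(e) + ω_V(v) ≥ 0. Then there exists a GMWCS-optimal connected subgraph H* of G such that u ∈ H* if and only if v ∈ H*, and moreover if u ∈ H* then the edge e belongs to H*. (This justifies the preprocessing rule that contracts e into a single vertex of weight ω_E(e) + ω_V(u) + ω_V(v).) -/
/-- The weight `Ω(H)` of a subgraph `H` of `G`. -/
noncomputable def Omega {V : Type*} [Fintype V] (G : SimpleGraph V) (H : G.Subgraph)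
    (wV : V → ℝ) (wE : Sym2 V → ℝ) : ℝ :=
  ∑ v ∈ H.verts.toFinite.toFinset, wV v + ∑ e ∈ H.edgeSet.toFinite.toFinset, wE e

open SimpleGraph in
lemma omega_le_of_le {V : Type*} [Fintype V] [DecidableEq V] {G : SimpleGraph V}
    {H S : G.Subgraph}
    (wV : V → ℝ) (wE : Sym2 V → ℝ) (hle : H ≤ S) :
    Omega G S wV wE = Omega G H wV wE
      + (∑ x ∈ S.verts.toFinite.toFinset \ H.verts.toFinite.toFinset, wV x)
      + (∑ e ∈ S.edgeSet.toFinite.toFinset \ H.edgeSet.toFinite.toFinset, wE e) := by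
  have hv : H.verts.toFinite.toFinset ⊆ S.verts.toFinite.toFinset := by
    rw [Set.Finite.toFinset_subset_toFinset]; exact hle.1
  have he : H.edgeSet.toFinite.toFinset ⊆ S.edgeSet.toFinite.toFinset := by
    rw [Set.Finite.toFinset_subset_toFinset]; exact Subgraph.edgeSet_mono hle
  have h1 := Finset.sum_sdiff (f := wV) hv
  have h2 := Finset.sum_sdiff (f := wE) he
  unfold Omega
  linarith

/-- If `e = {u,v}` is an edge of the connected graph `G` with `ω_E(e) ≥ 0`,
`ω_E(e) + ω_V(u) ≥ 0` and `ω_E(e) + ω_V(v) ≥ 0`, then there is a GMWCS-optimal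
connected subgraph `H*` of `G` containing `u` iff it contains `v`, and containing the
edge `e` whenever it contains `u`. -/
theorem stmt2 {V : Type*} [Fintype V] (G : SimpleGraph V) (hG : G.Connected)
    (wV : V → ℝ) (wE : Sym2 V → ℝ)
    (u v : V) (hadj : G.Adj u v)
    (h1 : wE s(u, v) ≥ 0) (h2 : wE s(u, v) + wV u ≥ 0) (h3 : wE s(u, v) + wV v ≥ 0) :
    ∃ Hstar : G.Subgraph, Hstar.Connected ∧
      (∀ H : G.Subgraph, H.Connected → Omega G H wV wE ≤ Omega G Hstar wV wE) ∧
      (u ∈ Hstar.verts ↔ v ∈ Hstar.verts) ∧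
      (u ∈ Hstar.verts → s(u, v) ∈ Hstar.edgeSet) := by
  classical
  haveI : Finite G.Subgraph :=
    Finite.of_injective (fun H => (H.verts, H.Adj)) (fun H K h => by
      rw [Prod.ext_iff] at h
      exact SimpleGraph.Subgraph.ext h.1 h.2)
  obtain ⟨H, hHconn, hmax⟩ := Set.exists_max_image {H : G.Subgraph | H.Connected}
    (fun H => Omega G H wV wE) (Set.toFinite _)
    ⟨G.subgraphOfAdj hadj, SimpleGraph.Subgraph.subgraphOfAdj_connected hadj⟩
  simp only [Set.mem_setOf_eq] at hHconn hmax
  by_cases huv : u ∈ H.verts ∨ v ∈ H.verts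
  · -- augment with the edge
    set S := H ⊔ G.subgraphOfAdj hadj with hS
    have hle : H ≤ S := le_sup_left
    have hSverts : S.verts = H.verts ∪ {u, v} := rfl
    have hSedges : S.edgeSet = H.edgeSet ∪ {s(u, v)} := by
      rw [SimpleGraph.Subgraph.edgeSet_sup, SimpleGraph.edgeSet_subgraphOfAdj]
    have hSconn : S.Connected := by
      refine SimpleGraph.Subgraph.connected_sup hHconn.preconnected (SimpleGraph.Subgraph.subgraphOfAdj_connected hadj).preconnected ?_
      rcases huv with hu | hv
      · exact ⟨u, hu, by simp⟩
      · exact ⟨v, hv, by simp⟩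
    have hkey := omega_le_of_le (H := H) (S := S) wV wE hle
    have hmem : ∀ x, x ∈ S.verts ↔ x ∈ H.verts ∨ x = u ∨ x = v := by
      intro x; rw [hSverts]; simp; tauto
    have heq : Omega G H wV wE ≤ Omega G S wV wE := by
      by_cases hu : u ∈ H.verts
      · by_cases hv : v ∈ H.verts
        · have hvd : S.verts.toFinite.toFinset \ H.verts.toFinite.toFinset = ∅ := by
            ext x
            simp only [Finset.mem_sdiff, Set.Finite.mem_toFinset, Finset.notMem_empty,
              iff_false, not_and, not_not]
            intro hx
            rcases (hmem x).1 hx with h | rfl | rfl <;> [exact h; exact hu; exact hv]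
          have hed : ∀ e ∈ S.edgeSet.toFinite.toFinset \ H.edgeSet.toFinite.toFinset,
              0 ≤ wE e := by
            intro e he
            simp only [Finset.mem_sdiff, Set.Finite.mem_toFinset, hSedges,
              Set.mem_union, Set.mem_singleton_iff] at he
            rcases he.1 with h | rfl
            · exact absurd h he.2
            · exact h1
          rw [hkey, hvd, Finset.sum_empty]
          have := Finset.sum_nonneg hed
          linarith
        · -- u ∈, v ∉
          have hne : s(u, v) ∉ H.edgeSet := fun h =>
            hv (SimpleGraph.Subgraph.Adj.snd_mem (SimpleGraph.Subgraph.mem_edgeSet.1 h))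
          have hvd : S.verts.toFinite.toFinset \ H.verts.toFinite.toFinset = {v} := by
            ext x
            simp only [Finset.mem_sdiff, Set.Finite.mem_toFinset, Finset.mem_singleton]
            constructor
            · rintro ⟨hx, hnx⟩
              rcases (hmem x).1 hx with h | rfl | rfl
              · exact absurd h hnx
              · exact absurd hu hnx
              · rfl
            · intro hx; rw [hx]; exact ⟨(hmem v).2 (Or.inr (Or.inr rfl)), hv⟩
          have hed : S.edgeSet.toFinite.toFinset \ H.edgeSet.toFinite.toFinset = {s(u, v)} := by
            ext e
            simp only [Finset.mem_sdiff, Set.Finite.mem_toFinset, Finset.mem_singleton, hSedges,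
              Set.mem_union, Set.mem_singleton_iff]
            constructor
            · rintro ⟨h | rfl, hn⟩
              · exact absurd h hn
              · rfl
            · rintro rfl; exact ⟨Or.inr rfl, hne⟩
          rw [hkey, hvd, hed, Finset.sum_singleton, Finset.sum_singleton]
          linarith
      · -- u ∉, so v ∈ by huv
        have hv : v ∈ H.verts := by tauto
        have hne : s(u, v) ∉ H.edgeSet := fun h =>
          hu (SimpleGraph.Subgraph.Adj.fst_mem (SimpleGraph.Subgraph.mem_edgeSet.1 h))
        have hvd : S.verts.toFinite.toFinset \ H.verts.toFinite.toFinset = {u} := by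
          ext x
          simp only [Finset.mem_sdiff, Set.Finite.mem_toFinset, Finset.mem_singleton]
          constructor
          · rintro ⟨hx, hnx⟩
            rcases (hmem x).1 hx with h | rfl | rfl
            · exact absurd h hnx
            · rfl
            · exact absurd hv hnx
          · intro hx; rw [hx]; exact ⟨(hmem u).2 (Or.inr (Or.inl rfl)), hu⟩
        have hed : S.edgeSet.toFinite.toFinset \ H.edgeSet.toFinite.toFinset = {s(u, v)} := by
          ext e
          simp only [Finset.mem_sdiff, Set.Finite.mem_toFinset, Finset.mem_singleton, hSedges,
            Set.mem_union, Set.mem_singleton_iff]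
          constructor
          · rintro ⟨h | rfl, hn⟩
            · exact absurd h hn
            · rfl
          · rintro rfl; exact ⟨Or.inr rfl, hne⟩
        rw [hkey, hvd, hed, Finset.sum_singleton, Finset.sum_singleton]
        linarith
    refine ⟨S, hSconn, fun H' hH' => le_trans (hmax H' hH') heq, ?_, fun _ => ?_⟩
    · constructor
      · intro _; exact (hmem v).2 (Or.inr (Or.inr rfl))
      · intro _; exact (hmem u).2 (Or.inr (Or.inl rfl))
    · rw [hSedges]; exact Or.inr rfl
  · push_neg at huv
    exact ⟨H, hHconn, hmax, by simp [huv.1, huv.2], fun h => absurd h huv.1⟩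
end

section
/- Suppose the vertex set V of G is the union of two sets V₁ and V₂ with V₁ ∩ V₂ = {c}, and no edge of G joins a vertex of V₁ \ {c} to a vertex of V₂ \ {c}. Let G̃ be a GMWCS-optimal connected subgraph of G containing c, and let G̃_c be a connected subgraph of G with all vertices in V₂, containing c, of maximal weight Ω among all such subgraphs. Then the subgraph G̃' obtained as the union of the restriction of G̃ to V₁ (its vertices in V₁ and its edges with both endpoints in V₁) with G̃_c is connected and satisfies Ω(G̃') = Ω(G̃); in particular G̃' is also GMWCS-optimal. -/
/-- If a set `S` is closed under edges of `H` leaving from non-`c` vertices, then the induced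
subgraph on `H.verts ∩ S` is connected. -/
lemma induce_connected_aux {V : Type*} {G : SimpleGraph V} (H : G.Subgraph)
    (hH : H.Connected) (S : Set V) (c : V) (hcH : c ∈ H.verts) (hcS : c ∈ S)
    (hclose : ∀ a b, H.Adj a b → a ∈ S → a ≠ c → b ∈ S) :
    (H.induce (H.verts ∩ S)).Connected := by
  rw [SimpleGraph.Subgraph.connected_iff]
  have hcm : c ∈ (H.induce (H.verts ∩ S)).verts := ⟨hcH, hcS⟩
  refine ⟨?_, ⟨c, hcm⟩⟩
  have key : ∀ (u w : H.verts) (p : H.coe.Walk u w) (_ : (w : V) = c) (hu : (u : V) ∈ S),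
      (H.induce (H.verts ∩ S)).coe.Reachable ⟨(u : V), ⟨u.2, hu⟩⟩ ⟨c, hcm⟩ := by
    intro u w p
    induction p with
    | nil =>
      rename_i z
      intro hw hu
      have hz : (⟨(z : V), ⟨z.2, hu⟩⟩ : (H.induce (H.verts ∩ S)).verts) = ⟨c, hcm⟩ :=
        Subtype.ext hw
      rw [hz]
    | @cons x y _ h q ih =>
      intro hw hu
      by_cases hc : (x : V) = c
      · have : (⟨(x : V), ⟨x.2, hu⟩⟩ : (H.induce (H.verts ∩ S)).verts) = ⟨c, hcm⟩ :=
          Subtype.ext hc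
        rw [this]
      · have hadjH : H.Adj (x : V) (y : V) := h
        have hv' : (y : V) ∈ S := hclose _ _ hadjH hu hc
        have hadj : (H.induce (H.verts ∩ S)).coe.Adj ⟨(x : V), ⟨x.2, hu⟩⟩
            ⟨(y : V), ⟨y.2, hv'⟩⟩ := by
          simp only [SimpleGraph.Subgraph.coe_adj]
          exact ⟨⟨x.2, hu⟩, ⟨y.2, hv'⟩, hadjH⟩
        exact hadj.reachable.trans (ih hw hv')
  constructor
  rintro ⟨x, hxH, hxS⟩ ⟨y, hyH, hyS⟩
  obtain ⟨p⟩ := hH ⟨x, hxH⟩ ⟨c, hcH⟩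
  obtain ⟨q⟩ := hH ⟨y, hyH⟩ ⟨c, hcH⟩
  exact (key ⟨x, hxH⟩ ⟨c, hcH⟩ p rfl hxS).trans (key ⟨y, hyH⟩ ⟨c, hcH⟩ q rfl hyS).symm

lemma Omega_sup_inf {V : Type*} [Fintype V] (G : SimpleGraph V) (X Y : G.Subgraph)
    (wV : V → ℝ) (wE : Sym2 V → ℝ) :
    Omega G (X ⊔ Y) wV wE + Omega G (X ⊓ Y) wV wE = Omega G X wV wE + Omega G Y wV wE := by
  classical
  have hv1 : (X ⊔ Y).verts.toFinite.toFinset =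
      X.verts.toFinite.toFinset ∪ Y.verts.toFinite.toFinset := by
    ext a; simp only [Set.Finite.mem_toFinset, Finset.mem_union, SimpleGraph.Subgraph.verts_sup]; exact Iff.rfl
  have hv2 : (X ⊓ Y).verts.toFinite.toFinset =
      X.verts.toFinite.toFinset ∩ Y.verts.toFinite.toFinset := by
    ext a; simp only [Set.Finite.mem_toFinset, Finset.mem_inter, SimpleGraph.Subgraph.verts_inf]; exact Iff.rfl
  have he1 : (X ⊔ Y).edgeSet.toFinite.toFinset =
      X.edgeSet.toFinite.toFinset ∪ Y.edgeSet.toFinite.toFinset := by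
    ext a; simp only [Set.Finite.mem_toFinset, Finset.mem_union, SimpleGraph.Subgraph.edgeSet_sup]; exact Iff.rfl
  have he2 : (X ⊓ Y).edgeSet.toFinite.toFinset =
      X.edgeSet.toFinite.toFinset ∩ Y.edgeSet.toFinite.toFinset := by
    ext a; simp only [Set.Finite.mem_toFinset, Finset.mem_inter, SimpleGraph.Subgraph.edgeSet_inf]; exact Iff.rfl
  have hV := Finset.sum_union_inter (s₁ := X.verts.toFinite.toFinset)
    (s₂ := Y.verts.toFinite.toFinset) (f := wV)
  have hE := Finset.sum_union_inter (s₁ := X.edgeSet.toFinite.toFinset)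
    (s₂ := Y.edgeSet.toFinite.toFinset) (f := wE)
  unfold Omega
  rw [hv1, hv2, he1, he2]
  linarith

lemma Omega_point {V : Type*} [Fintype V] (G : SimpleGraph V) (H : G.Subgraph)
    (wV : V → ℝ) (wE : Sym2 V → ℝ) (c : V)
    (hv : H.verts = {c}) (he : H.edgeSet = ∅) :
    Omega G H wV wE = wV c := by
  unfold Omega
  have h1 : H.verts.toFinite.toFinset = {c} := by
    ext a; simp [Set.Finite.mem_toFinset, hv]
  have h2 : H.edgeSet.toFinite.toFinset = ∅ := by
    ext a; simp [Set.Finite.mem_toFinset, he]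
  rw [h1, h2]
  simp

/-- Suppose `V = V₁ ∪ V₂` with `V₁ ∩ V₂ = {c}` and no edge of `G` joins `V₁ \ {c}` to
`V₂ \ {c}`. Let `G̃` be a GMWCS-optimal connected subgraph containing `c` and `G̃_c` a
connected subgraph with vertices in `V₂` containing `c` of maximal weight among such.
Then the union of the restriction of `G̃` to `V₁` with `G̃_c` is connected of the same
weight as `G̃`, hence also GMWCS-optimal. -/
theorem stmt7 {V : Type*} [Fintype V] (G : SimpleGraph V) (hG : G.Connected)
    (wV : V → ℝ) (wE : Sym2 V → ℝ)
    (V₁ V₂ : Set V) (c : V)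
    (hcover : V₁ ∪ V₂ = Set.univ) (hinter : V₁ ∩ V₂ = {c})
    (hsep : ∀ a b : V, G.Adj a b → a ∈ V₁ \ {c} → b ∉ V₂ \ {c})
    (Gt : G.Subgraph) (hGt : Gt.Connected) (hcGt : c ∈ Gt.verts)
    (hGtopt : ∀ H : G.Subgraph, H.Connected → Omega G H wV wE ≤ Omega G Gt wV wE)
    (Gc : G.Subgraph) (hGc : Gc.Connected) (hGcsub : Gc.verts ⊆ V₂) (hcGc : c ∈ Gc.verts)
    (hGcopt : ∀ H : G.Subgraph, H.Connected → H.verts ⊆ V₂ → c ∈ H.verts →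
      Omega G H wV wE ≤ Omega G Gc wV wE) :
    (Gt.induce (Gt.verts ∩ V₁) ⊔ Gc).Connected ∧
      Omega G (Gt.induce (Gt.verts ∩ V₁) ⊔ Gc) wV wE = Omega G Gt wV wE ∧
      (∀ H : G.Subgraph, H.Connected →
        Omega G H wV wE ≤ Omega G (Gt.induce (Gt.verts ∩ V₁) ⊔ Gc) wV wE) := by
  have hc12 : c ∈ V₁ ∩ V₂ := hinter ▸ rfl
  have hcV₁ : c ∈ V₁ := hc12.1
  have hcV₂ : c ∈ V₂ := hc12.2
  have hmemcases : ∀ a : V, a ∈ V₁ ∨ a ∈ V₂ := fun a => by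
    have : a ∈ V₁ ∪ V₂ := hcover ▸ Set.mem_univ a
    exact this
  set A := Gt.induce (Gt.verts ∩ V₁) with hAdef
  set B := Gt.induce (Gt.verts ∩ V₂) with hBdef
  -- closure properties
  have hclose₁ : ∀ a b, Gt.Adj a b → a ∈ V₁ → a ≠ c → b ∈ V₁ := by
    intro a b h ha hac
    have hb : b ∉ V₂ \ {c} := hsep a b h.adj_sub ⟨ha, hac⟩
    rcases hmemcases b with hb1 | hb2
    · exact hb1
    · have : b = c := by by_contra hbc; exact hb ⟨hb2, hbc⟩
      exact this ▸ hcV₁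
  have hclose₂ : ∀ a b, Gt.Adj a b → a ∈ V₂ → a ≠ c → b ∈ V₂ := by
    intro a b h ha hac
    rcases hmemcases b with hb1 | hb2
    · by_cases hbc : b = c
      · exact hbc ▸ hcV₂
      · exact absurd ⟨ha, hac⟩ (hsep b a h.symm.adj_sub ⟨hb1, hbc⟩)
    · exact hb2
  have hA : A.Connected := induce_connected_aux Gt hGt V₁ c hcGt hcV₁ hclose₁
  have hB : B.Connected := induce_connected_aux Gt hGt V₂ c hcGt hcV₂ hclose₂
  -- edge classification
  have hGtedge : ∀ a b, Gt.Adj a b → (a ∈ V₁ ∧ b ∈ V₁) ∨ (a ∈ V₂ ∧ b ∈ V₂) := by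
    intro a b h
    rcases hmemcases a with ha | ha
    · by_cases hac : a = c
      · rcases hmemcases b with hb | hb
        · exact Or.inl ⟨ha, hb⟩
        · exact Or.inr ⟨hac ▸ hcV₂, hb⟩
      · exact Or.inl ⟨ha, hclose₁ a b h ha hac⟩
    · by_cases hac : a = c
      · rcases hmemcases b with hb | hb
        · exact Or.inl ⟨hac ▸ hcV₁, hb⟩
        · exact Or.inr ⟨ha, hb⟩
      · exact Or.inr ⟨ha, hclose₂ a b h ha hac⟩
  -- Gt = A ⊔ B
  have hGteq : Gt = A ⊔ B := by
    apply le_antisymm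
    · constructor
      · intro v hv
        rcases hmemcases v with h1 | h2
        · exact Or.inl ⟨hv, h1⟩
        · exact Or.inr ⟨hv, h2⟩
      · intro a b h
        rcases hGtedge a b h with ⟨ha, hb⟩ | ⟨ha, hb⟩
        · exact Or.inl ⟨⟨h.fst_mem, ha⟩, ⟨h.snd_mem, hb⟩, h⟩
        · exact Or.inr ⟨⟨h.fst_mem, ha⟩, ⟨h.snd_mem, hb⟩, h⟩
    · refine sup_le ⟨Set.inter_subset_left, fun _ _ h => h.2.2⟩
        ⟨Set.inter_subset_left, fun _ _ h => h.2.2⟩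
  -- A ⊓ B
  have hABv : (A ⊓ B).verts = {c} := by
    rw [SimpleGraph.Subgraph.verts_inf]
    ext v
    constructor
    · rintro ⟨⟨_, hv1⟩, ⟨_, hv2⟩⟩
      have : v ∈ V₁ ∩ V₂ := ⟨hv1, hv2⟩
      rwa [hinter] at this
    · rintro rfl
      exact ⟨⟨hcGt, hcV₁⟩, ⟨hcGt, hcV₂⟩⟩
  have hABe : (A ⊓ B).edgeSet = ∅ := by
    ext e
    refine ⟨?_, fun h => h.elim⟩
    induction e with
    | h a b =>
      rintro h
      rw [SimpleGraph.Subgraph.mem_edgeSet] at h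
      obtain ⟨⟨⟨_, ha1⟩, ⟨_, hb1⟩, hab⟩, ⟨_, ha2⟩, ⟨_, hb2⟩, _⟩ := h
      have hac : a = c := by
        have : a ∈ V₁ ∩ V₂ := ⟨ha1, ha2⟩; rwa [hinter] at this
      have hbc : b = c := by
        have : b ∈ V₁ ∩ V₂ := ⟨hb1, hb2⟩; rwa [hinter] at this
      exact hab.adj_sub.ne (hac.trans hbc.symm)
  -- A ⊓ Gc
  have hAGv : (A ⊓ Gc).verts = {c} := by
    rw [SimpleGraph.Subgraph.verts_inf]
    ext v
    constructor
    · rintro ⟨⟨_, hv1⟩, hv2⟩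
      have : v ∈ V₁ ∩ V₂ := ⟨hv1, hGcsub hv2⟩
      rwa [hinter] at this
    · rintro rfl
      exact ⟨⟨hcGt, hcV₁⟩, hcGc⟩
  have hAGe : (A ⊓ Gc).edgeSet = ∅ := by
    ext e
    refine ⟨?_, fun h => h.elim⟩
    induction e with
    | h a b =>
      rintro h
      rw [SimpleGraph.Subgraph.mem_edgeSet] at h
      obtain ⟨⟨⟨_, ha1⟩, ⟨_, hb1⟩, hab⟩, hg⟩ := h
      have hac : a = c := by
        have : a ∈ V₁ ∩ V₂ := ⟨ha1, hGcsub hg.fst_mem⟩; rwa [hinter] at this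
      have hbc : b = c := by
        have : b ∈ V₁ ∩ V₂ := ⟨hb1, hGcsub hg.snd_mem⟩; rwa [hinter] at this
      exact hab.adj_sub.ne (hac.trans hbc.symm)
  -- connectedness of A ⊔ Gc
  have hKconn : (A ⊔ Gc).Connected := by
    refine SimpleGraph.Subgraph.connected_sup hA.preconnected hGc.preconnected ?_
    rw [SimpleGraph.Subgraph.verts_inf]
    exact ⟨c, ⟨hcGt, hcV₁⟩, hcGc⟩
  -- weight equalities
  have e1 : Omega G (A ⊔ Gc) wV wE + wV c = Omega G A wV wE + Omega G Gc wV wE := by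
    have := Omega_sup_inf G A Gc wV wE
    rwa [Omega_point G (A ⊓ Gc) wV wE c hAGv hAGe] at this
  have e2 : Omega G Gt wV wE + wV c = Omega G A wV wE + Omega G B wV wE := by
    have := Omega_sup_inf G A B wV wE
    rw [Omega_point G (A ⊓ B) wV wE c hABv hABe] at this
    rw [hGteq]
    exact this
  have e3 : Omega G B wV wE ≤ Omega G Gc wV wE :=
    hGcopt B hB Set.inter_subset_right ⟨hcGt, hcV₂⟩
  have e4 : Omega G (A ⊔ Gc) wV wE ≤ Omega G Gt wV wE := hGtopt _ hKconn
  have heq : Omega G (A ⊔ Gc) wV wE = Omega G Gt wV wE := by linarith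
  exact ⟨hKconn, heq, fun H hH => (hGtopt H hH).trans_eq heq.symm⟩
end
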